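/- In a finite topological space X, the collection of forward open balls B⁺(x,n) = {y ∈ X : Ψ(x,y) < n}, for x ∈ X and n ≥ 1, forms a basis generating exactly the original topology of X. -/

import Mathlib

open Set Topology

/-- The minimal open set containing `x`: the intersection of all open sets containing `x`. -/
def minOpen (X : Type*) [TopologicalSpace X] (x : X) : Set X :=
  ⋂₀ {U : Set X | IsOpen U ∧ x ∈ U}

/-- A nested sequence of open sets around `x`: a sequence of open sets starting at the
minimal open set of `x`, increasing, strictly increasing until it reaches the whole space
(after which it is stationary), with no open set strictly between consecutive terms. -/
def NestedSeq (X : Type*) [TopologicalSpace X] (x : X) (c : ℕ → Set X) : Prop :=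
  c 0 = minOpen X x ∧ (∀ j, IsOpen (c j)) ∧
  (∀ j, c j ⊆ c (j + 1)) ∧
  (∀ j, c j ≠ c (j + 1) ∨ c j = Set.univ) ∧
  (∀ j, ∀ V : Set X, IsOpen V → c j ⊆ V → V ⊆ c (j + 1) → V = c j ∨ V = c (j + 1))

/-- The furtherness `Ψ(x,y)`: the least `k` such that `y` belongs to the `k`-th term of
some nested sequence of open sets around `x`. -/
noncomputable def furth (X : Type*) [TopologicalSpace X] (x y : X) : ℕ :=
  sInf {k | ∃ c : ℕ → Set X, NestedSeq X x c ∧ y ∈ c k}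

lemma minOpen_isOpen (X : Type*) [TopologicalSpace X] [Finite X] (x : X) :
    IsOpen (minOpen X x) :=
  Set.Finite.isOpen_sInter (Set.toFinite _) (fun _ h => h.1)

lemma mem_minOpen (X : Type*) [TopologicalSpace X] (x : X) : x ∈ minOpen X x :=
  fun _ h => h.2

lemma exists_succ (X : Type*) [TopologicalSpace X] [Finite X] (U : Set X)
    (hU : IsOpen U) (hne : U ≠ univ) :
    ∃ V, IsOpen V ∧ U ⊂ V ∧ ∀ W, IsOpen W → U ⊂ W → W ⊆ V → W = V := by
  obtain ⟨m, hm, hmin⟩ := Set.Finite.exists_minimalFor id {V : Set X | IsOpen V ∧ U ⊂ V}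
    (Set.toFinite _) ⟨univ, isOpen_univ, Ne.lt_of_le hne (subset_univ U)⟩
  exact ⟨m, hm.1, hm.2, fun W hW hUW hWm => subset_antisymm hWm (hmin ⟨hW, hUW⟩ hWm)⟩

attribute [local instance] Classical.propDecidable

/-- a canonical nested sequence -/
noncomputable def canon (X : Type*) [TopologicalSpace X] [Finite X] (x : X) : ℕ → Set X
  | 0 => minOpen X x
  | (j+1) =>
    let U := canon X x j
    if h : IsOpen U ∧ U ≠ univ then (exists_succ X U h.1 h.2).choose else U

lemma canon_isOpen (X : Type*) [TopologicalSpace X] [Finite X] (x : X) (j : ℕ) :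
    IsOpen (canon X x j) := by
  induction j with
  | zero => exact minOpen_isOpen X x
  | succ j ih =>
    simp only [canon]
    split
    · next h => exact (exists_succ X _ h.1 h.2).choose_spec.1
    · exact ih

lemma canon_nested (X : Type*) [TopologicalSpace X] [Finite X] (x : X) :
    NestedSeq X x (canon X x) := by
  refine ⟨rfl, canon_isOpen X x, ?_, ?_, ?_⟩
  · intro j
    simp only [canon]
    split
    · next h => exact (exists_succ X _ h.1 h.2).choose_spec.2.1.le
    · exact subset_rfl
  · intro j
    by_cases h : canon X x j = univ
    · exact Or.inr h
    · left
      have h' : IsOpen (canon X x j) ∧ canon X x j ≠ univ := ⟨canon_isOpen X x j, h⟩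
      simp only [canon, dif_pos h']
      exact ((exists_succ X _ h'.1 h'.2).choose_spec.2.1.ne)
  · intro j V hV h1 h2
    by_cases h : canon X x j = univ
    · right
      have : canon X x (j+1) = canon X x j := by
        simp only [canon]
        rw [dif_neg]
        simp [h]
      rw [this] at h2 ⊢
      exact subset_antisymm h2 h1
    · have h' : IsOpen (canon X x j) ∧ canon X x j ≠ univ := ⟨canon_isOpen X x j, h⟩
      rw [show canon X x (j+1) = (exists_succ X _ h'.1 h'.2).choose from by
        simp only [canon, dif_pos h']] at h2 ⊢
      by_cases hV2 : V = canon X x j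
      · exact Or.inl hV2
      · exact Or.inr ((exists_succ X _ h'.1 h'.2).choose_spec.2.2 V hV
          (h1.ssubset_of_ne (Ne.symm hV2)) h2)

lemma canon_eventually_univ (X : Type*) [TopologicalSpace X] [Finite X] (x : X) :
    ∃ k, canon X x k = univ := by
  by_contra h
  push_neg at h
  have hmono : StrictMono (canon X x) := by
    apply strictMono_nat_of_lt_succ
    intro j
    have h' : IsOpen (canon X x j) ∧ canon X x j ≠ univ := ⟨canon_isOpen X x j, h j⟩
    have : canon X x (j+1) = (exists_succ X _ h'.1 h'.2).choose := by
      simp only [canon, dif_pos h']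
    rw [this]
    exact (exists_succ X _ h'.1 h'.2).choose_spec.2.1
  obtain ⟨a, b, hab, heq⟩ := Finite.exists_ne_map_eq_of_infinite (canon X x)
  exact hab (hmono.injective heq)

lemma furthSet_nonempty (X : Type*) [TopologicalSpace X] [Finite X] (x y : X) :
    {k | ∃ c : ℕ → Set X, NestedSeq X x c ∧ y ∈ c k}.Nonempty := by
  obtain ⟨k, hk⟩ := canon_eventually_univ X x
  exact ⟨k, canon X x, canon_nested X x, hk ▸ mem_univ y⟩

lemma furth_lt_iff (X : Type*) [TopologicalSpace X] [Finite X] (x y : X) (n : ℕ) (hn : 1 ≤ n) :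
    furth X x y < n ↔ ∃ c : ℕ → Set X, NestedSeq X x c ∧ y ∈ c (n - 1) := by
  constructor
  · intro h
    have := Nat.sInf_mem (furthSet_nonempty X x y)
    obtain ⟨c, hc, hy⟩ := this
    refine ⟨c, hc, ?_⟩
    have hmono : Monotone c := monotone_nat_of_le_succ (fun j => hc.2.2.1 j)
    exact hmono (show furth X x y ≤ n - 1 by omega) hy
  · rintro ⟨c, hc, hy⟩
    have : furth X x y ≤ n - 1 := Nat.sInf_le ⟨c, hc, hy⟩
    omega

theorem stmt12 (X : Type*) [TopologicalSpace X] [Finite X] :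
    TopologicalSpace.IsTopologicalBasis
      {B : Set X | ∃ x : X, ∃ n : ℕ, 1 ≤ n ∧ B = {y : X | furth X x y < n}} := by
  apply TopologicalSpace.isTopologicalBasis_of_isOpen_of_nhds
  · rintro B ⟨x, n, hn, rfl⟩
    have : {y : X | furth X x y < n} =
        ⋃ c ∈ {c : ℕ → Set X | NestedSeq X x c}, c (n - 1) := by
      ext y
      simp only [mem_setOf_eq, mem_iUnion]
      rw [furth_lt_iff X x y n hn]
      constructor
      · rintro ⟨c, hc, hy⟩; exact ⟨c, hc, hy⟩
      · rintro ⟨c, hc, hy⟩; exact ⟨c, hc, hy⟩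
    rw [this]
    exact isOpen_biUnion (fun c hc => hc.2.1 _)
  · intro x U hxU hU
    refine ⟨{y : X | furth X x y < 1}, ⟨x, 1, le_refl 1, rfl⟩, ?_, ?_⟩
    · rw [mem_setOf_eq, furth_lt_iff X x x 1 le_rfl]
      exact ⟨canon X x, canon_nested X x, mem_minOpen X x⟩
    · intro y hy
      rw [mem_setOf_eq, furth_lt_iff X x y 1 le_rfl] at hy
      obtain ⟨c, hc, hy⟩ := hy
      rw [hc.1] at hy
      exact hy U ⟨hU, hxU⟩
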